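/- Let S be a supercharacter theory of a finite group G, and define V_1(S) = V(S), V_i(S) = [V_{i-1}(S), S] for i ≥ 2, and the lower S-central series γ_1(S) = G, γ_i(S) = [γ_{i-1}(S), S]. Then for all i ≥ 1, γ_{i+1}(S) ≤ V_i(S) ≤ γ_i(S). -/

import Mathlib

open scoped BigOperators Pointwise

/-- `f : G → ℂ` is an irreducible character of `G`. -/
def IsIrrChar (G : Type) [Group G] [Fintype G] (f : G → ℂ) : Prop :=
  ∃ V : FDRep ℂ G, CategoryTheory.Simple V ∧ V.character = f

/-- A supercharacter theory of a finite group `G` (Diaconis–Isaacs): a partition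
`parts` of the set of irreducible characters of `G` together with a partition of `G`
into `S`-classes (`cls g` is the class of `g`), such that `{1}` is a class, the number
of parts equals the number of classes, and each supercharacter
`σ_X = ∑ χ ∈ X, χ(1)·χ` is constant on every class. -/
structure SCT (G : Type) [Group G] [Fintype G] where
  parts : Finset (Finset (G → ℂ))
  cls : G → Set G
  parts_cover : ∀ f : G → ℂ, IsIrrChar G f ↔ ∃ X ∈ parts, f ∈ X
  parts_disj : ∀ X ∈ parts, ∀ Y ∈ parts, X ≠ Y → Disjoint X Y
  parts_nonempty : ∀ X ∈ parts, X.Nonempty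
  mem_cls : ∀ g : G, g ∈ cls g
  cls_eq : ∀ g h : G, h ∈ cls g → cls h = cls g
  cls_one : cls (1 : G) = {1}
  card_eq : parts.card = Nat.card (Set.range cls)
  const : ∀ X ∈ parts, ∀ g h : G, h ∈ cls g →
    (∑ χ ∈ X, χ 1 * χ h) = (∑ χ ∈ X, χ 1 * χ g)

variable {G : Type} [Group G] [Fintype G]

namespace SCT

/-- The supercharacter attached to a part `X`. -/
noncomputable def superchar (_S : SCT G) (X : Finset (G → ℂ)) : G → ℂ := fun g => ∑ χ ∈ X, χ 1 * χ g

/-- The set `Irr(S)` of `S`-characters. -/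
def Irr (S : SCT G) : Set (G → ℂ) := {f | ∃ X ∈ S.parts, f = S.superchar X}

end SCT

/-- The kernel of a character-like function `f : G → ℂ`. -/
def charKer (f : G → ℂ) : Subgroup G where
  carrier := {g | ∀ h, f (g * h) = f h}
  one_mem' := by intro h; simp
  mul_mem' := by intro a b ha hb h; rw [mul_assoc, ha, hb]
  inv_mem' := by
    intro a ha h
    have := ha (a⁻¹ * h)
    rw [mul_inv_cancel_left] at this
    exact this.symm

namespace SCT

/-- `[H,S]`, the subgroup generated by the `g⁻¹k` with `g ∈ H`, `k ∈ Cl_S(g)`. -/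
def comm (S : SCT G) (H : Subgroup G) : Subgroup G :=
  Subgroup.closure {x | ∃ g ∈ H, ∃ k ∈ S.cls g, x = g⁻¹ * k}

/-- `[G,S]`. -/
def derived (S : SCT G) : Subgroup G := S.comm ⊤

/-- `Irr(S | N)`: the `S`-characters whose kernel does not contain `N`. -/
def IrrRel (S : SCT G) (N : Subgroup G) : Set (G → ℂ) :=
  {f | f ∈ S.Irr ∧ ¬ N ≤ charKer f}

/-- `g` is an `S`-Camina element: all of `Irr(S | [G,S])` vanishes at `g`. -/
def IsCaminaElt (S : SCT G) (g : G) : Prop :=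
  ∀ f ∈ S.IrrRel S.derived, f g = 0

/-- `N` is `S`-normal: a union of `S`-classes. -/
def IsNormal (S : SCT G) (N : Subgroup G) : Prop :=
  ∀ g ∈ N, S.cls g ⊆ N

/-- `(G,N)` is a generalised `S`-Camina pair. -/
def IsGCP (S : SCT G) (N : Subgroup G) : Prop :=
  S.IsNormal N ∧ ∀ g : G, g ∉ N → S.IsCaminaElt g

/-- The set `Z(S)` of elements with singleton `S`-class. -/
def centerSet (S : SCT G) : Set G := {g | S.cls g = {g}}

/-- The vanishing-off subgroup `V(S | N)`. -/
def V (S : SCT G) (N : Subgroup G) : Subgroup G :=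
  Subgroup.closure {g | ∃ f ∈ S.IrrRel N, f g ≠ 0}

/-- `V(S) = V(S | [G,S])`. -/
def VS (S : SCT G) : Subgroup G := S.V S.derived

/-- `U(S | N)`: the product of all `S`-normal subgroups `H` with `V(S | H) ≤ N`. -/
def U (S : SCT G) (N : Subgroup G) : Subgroup G :=
  ⨆ (H : Subgroup G) (_ : S.IsNormal H ∧ S.V H ≤ N), H

/-- The upper `S`-central series: `ζ_0 = 1` and `ζ_{i+1}/ζ_i = Z(S^{G/ζ_i})`,
i.e. `ζ_{i+1}` consists of the `g` whose `S`-class maps onto the single coset `gζ_i`. -/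
def zeta (S : SCT G) : ℕ → Subgroup G
  | 0 => ⊥
  | i + 1 => Subgroup.closure {g | ∀ k ∈ S.cls g, g⁻¹ * k ∈ S.zeta i}

/-- The lower `S`-central series `γ_1 = G`, `γ_{i+1} = [γ_i, S]` (with `γ_0 := G`). -/
def gamma (S : SCT G) : ℕ → Subgroup G
  | 0 => ⊤
  | 1 => ⊤
  | n + 2 => S.comm (S.gamma (n + 1))

/-- The series `V_1(S) = V(S)`, `V_{i+1}(S) = [V_i(S), S]` (with `V_0 := V(S)`). -/
def Vseq (S : SCT G) : ℕ → Subgroup G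
  | 0 => S.VS
  | 1 => S.VS
  | n + 2 => S.comm (S.Vseq (n + 1))

/-- `G` is a `VZ(S)`-group: every member of `Irr(S | [G,S])` vanishes off `Z(S)`. -/
def IsVZ (S : SCT G) : Prop :=
  ∀ f ∈ S.IrrRel S.derived, ∀ g : G, g ∉ S.centerSet → f g = 0

end SCT

/-! Both inclusions propagate from `i = 1` by monotonicity of `H ↦ [H,S]`, so everything
rests on `[G,S] ≤ V(S)`, and in fact `N ≤ V(S | N)` holds for every subgroup `N`. Let
`1 ≠ t ∈ N`. The regular character `∑_X σ_X` vanishes at `t`, while each `σ_X` whose kernel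
contains `N` takes the value `σ_X(1) > 0` at `t`. So if every `σ_X` with `N ⊄ ker σ_X`
vanished at `t`, no kernel would contain `N`, and then all `σ_X` would vanish at `t`: impossible,
since the supercharacters span the `S`-class functions, constants included. -/

open Classical

namespace IsIrrChar

theorem sum_mul_inv_eq {f₁ f₂ : G → ℂ} (h₁ : IsIrrChar G f₁) (h₂ : IsIrrChar G f₂) :
    ∑ x : G, f₁ x * f₂ x⁻¹ = if f₁ = f₂ then (Fintype.card G : ℂ) else 0 := by
  obtain ⟨V, hV, rfl⟩ := h₁
  obtain ⟨W, hW, rfl⟩ := h₂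
  split_ifs with heq
  · rw [heq, ← Nat.card_eq_fintype_card]
    exact (FDRep.simple_iff_char_is_norm_one W).mp hW
  · have h := FDRep.char_orthonormal V W
    rw [if_neg fun ⟨i⟩ => heq (FDRep.char_iso i), mul_eq_zero] at h
    exact h.resolve_left (inv_ne_zero (by simp))

theorem exists_pos_nat_apply_one {f : G → ℂ} (h : IsIrrChar G f) :
    ∃ n : ℕ, 0 < n ∧ f 1 = n := by
  obtain ⟨V, hV, rfl⟩ := h
  refine ⟨Module.finrank ℂ V, Nat.pos_of_ne_zero fun h0 => ?_, FDRep.char_one V⟩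
  have : Subsingleton V := Module.finrank_zero_iff.mp h0
  have hnorm := (FDRep.simple_iff_char_is_norm_one V).mp hV
  simp [FDRep.character, Subsingleton.elim (V.ρ _) 0, eq_comm] at hnorm

end IsIrrChar

namespace SCT

variable (S : SCT G)

theorem isIrrChar_of_mem {X : Finset (G → ℂ)} (hX : X ∈ S.parts) {f : G → ℂ} (hf : f ∈ X) :
    IsIrrChar G f :=
  (S.parts_cover f).mpr ⟨X, hX, hf⟩

theorem superchar_one_re_pos {X : Finset (G → ℂ)} (hX : X ∈ S.parts) :
    0 < (S.superchar X 1).re := by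
  rw [superchar, Complex.re_sum]
  refine Finset.sum_pos (fun χ hχ => ?_) (S.parts_nonempty X hX)
  obtain ⟨n, hn, hχ1⟩ := (S.isIrrChar_of_mem hX hχ).exists_pos_nat_apply_one
  rw [hχ1, ← Nat.cast_mul, Complex.natCast_re]
  exact_mod_cast Nat.mul_pos hn hn

theorem superchar_one_ne_zero {X : Finset (G → ℂ)} (hX : X ∈ S.parts) :
    S.superchar X 1 ≠ 0 := fun h => by
  simpa [h] using S.superchar_one_re_pos hX

theorem sum_superchar_mul_inv_eq {X Y : Finset (G → ℂ)} (hX : X ∈ S.parts) (hY : Y ∈ S.parts) :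
    ∑ x : G, S.superchar X x * S.superchar Y x⁻¹ =
      if X = Y then (Fintype.card G : ℂ) * S.superchar X 1 else 0 := by
  have expand : ∑ x : G, S.superchar X x * S.superchar Y x⁻¹ =
      ∑ χ ∈ X, ∑ ψ ∈ Y, χ 1 * ψ 1 * ∑ x : G, χ x * ψ x⁻¹ := by
    simp only [superchar, Finset.sum_mul_sum]
    rw [Finset.sum_comm]
    refine Finset.sum_congr rfl fun χ _ => ?_
    rw [Finset.sum_comm]
    refine Finset.sum_congr rfl fun ψ _ => ?_
    rw [Finset.mul_sum]
    exact Finset.sum_congr rfl fun x _ => by ring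
  have orth : ∀ χ ∈ X, ∑ ψ ∈ Y, χ 1 * ψ 1 * ∑ x : G, χ x * ψ x⁻¹ =
      if χ ∈ Y then (Fintype.card G : ℂ) * (χ 1 * χ 1) else 0 := by
    intro χ hχ
    rw [Finset.sum_congr rfl fun ψ hψ => by
      rw [(S.isIrrChar_of_mem hX hχ).sum_mul_inv_eq (S.isIrrChar_of_mem hY hψ)]]
    simp only [mul_ite, mul_zero, Finset.sum_ite_eq]
    exact if_congr Iff.rfl (by ring) rfl
  rw [expand, Finset.sum_congr rfl orth]
  split_ifs with hXY
  · subst hXY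
    rw [superchar, Finset.mul_sum]
    exact Finset.sum_congr rfl fun χ hχ => if_pos hχ
  · exact Finset.sum_eq_zero fun χ hχ =>
      if_neg (Finset.disjoint_left.mp (S.parts_disj X hX Y hY hXY) hχ)

def classFun : Submodule ℂ (G → ℂ) where
  carrier := {f | ∀ g h, h ∈ S.cls g → f h = f g}
  add_mem' hf₁ hf₂ g h hh := by simp only [Pi.add_apply, hf₁ g h hh, hf₂ g h hh]
  zero_mem' _ _ _ := rfl
  smul_mem' c _ hf g h hh := by simp only [Pi.smul_apply, hf g h hh]

theorem superchar_mem_classFun {X : Finset (G → ℂ)} (hX : X ∈ S.parts) :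
    S.superchar X ∈ S.classFun :=
  S.const X hX

noncomputable def classFunEquiv : S.classFun ≃ₗ[ℂ] (Set.range S.cls → ℂ) where
  toFun f C := f.1 C.2.choose
  map_add' _ _ := rfl
  map_smul' _ _ := rfl
  invFun u := ⟨fun g => u ⟨S.cls g, g, rfl⟩,
    fun g h hh => congrArg u (Subtype.ext (S.cls_eq g h hh))⟩
  left_inv f := Subtype.ext <| funext fun g => by
    refine (f.2 _ g ?_).symm
    rw [(⟨S.cls g, g, rfl⟩ : Set.range S.cls).2.choose_spec]
    exact S.mem_cls g
  right_inv u := funext fun C => congrArg u (Subtype.ext C.2.choose_spec)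

theorem finrank_classFun : Module.finrank ℂ S.classFun = S.parts.card := by
  have : Fintype (Set.range S.cls) := Fintype.ofFinite _
  rw [S.classFunEquiv.finrank_eq, Module.finrank_fintype_fun_eq_card, S.card_eq,
    Nat.card_eq_fintype_card]

theorem sum_lincomb_superchar_mul_inv (c : S.parts → ℂ) {Y : Finset (G → ℂ)} (hY : Y ∈ S.parts) :
    ∑ x : G, (∑ X : S.parts, c X * S.superchar X x) * S.superchar Y x⁻¹ =
      c ⟨Y, hY⟩ * ((Fintype.card G : ℂ) * S.superchar Y 1) := by
  simp only [Finset.sum_mul, mul_assoc]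
  rw [Finset.sum_comm]
  simp only [← Finset.mul_sum, S.sum_superchar_mul_inv_eq _ hY, Finset.coe_mem]
  rw [Finset.sum_eq_single_of_mem ⟨Y, hY⟩ (Finset.mem_univ _) fun X _ hXY => by
    rw [if_neg fun h => hXY (Subtype.ext h), mul_zero]]
  rw [if_pos rfl]

theorem linearIndependent_superchar :
    LinearIndependent ℂ fun X : S.parts => S.superchar X := by
  refine Fintype.linearIndependent_iff.mpr fun c hc Y => ?_
  have hzero : ∀ x, ∑ X : S.parts, c X * S.superchar X x = 0 := fun x => by
    simpa using congrFun hc x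
  have h := S.sum_lincomb_superchar_mul_inv c Y.2
  simp only [hzero, zero_mul, Finset.sum_const_zero] at h
  exact (mul_eq_zero.mp h.symm).resolve_right
    (mul_ne_zero (by simp) (S.superchar_one_ne_zero Y.2))

theorem span_superchar :
    Submodule.span ℂ (Set.range fun X : S.parts => S.superchar X) = S.classFun := by
  refine Submodule.eq_of_le_of_finrank_eq ?_ ?_
  · rw [Submodule.span_le]
    rintro _ ⟨X, rfl⟩
    exact S.superchar_mem_classFun X.2
  · rw [finrank_span_eq_card S.linearIndependent_superchar, finrank_classFun,
      Fintype.card_coe]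

theorem exists_eq_sum_superchar {f : G → ℂ} (hf : f ∈ S.classFun) :
    ∃ c : S.parts → ℂ, ∀ g, f g = ∑ X : S.parts, c X * S.superchar X g := by
  rw [← span_superchar, Submodule.mem_span_range_iff_exists_fun] at hf
  obtain ⟨c, rfl⟩ := hf
  exact ⟨c, fun g => by simp⟩

theorem pi_single_one_mem_classFun : (Pi.single 1 1 : G → ℂ) ∈ S.classFun := by
  intro g h hh
  have hiff : h = 1 ↔ g = 1 := by
    constructor <;> rintro rfl
    · simpa [S.cls_one] using (S.cls_eq g 1 hh ▸ S.mem_cls g : g ∈ S.cls 1)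
    · simpa [S.cls_one] using hh
  simp only [Pi.single_apply, hiff]

theorem sum_superchar_eq_zero_of_ne_one {t : G} (ht : t ≠ 1) :
    ∑ X ∈ S.parts, S.superchar X t = 0 := by
  obtain ⟨c, hc⟩ := S.exists_eq_sum_superchar S.pi_single_one_mem_classFun
  have hcoeff : ∀ X : S.parts, (Fintype.card G : ℂ) * c X = 1 := fun Y => by
    have h := S.sum_lincomb_superchar_mul_inv c Y.2
    simp only [← hc, Pi.single_apply, ite_mul, one_mul, zero_mul, Finset.sum_ite_eq',
      Finset.mem_univ, if_true, inv_one] at h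
    exact mul_right_cancel₀ (S.superchar_one_ne_zero Y.2) (by linear_combination -h)
  calc ∑ X ∈ S.parts, S.superchar X t
      = (Fintype.card G : ℂ) * ∑ X : S.parts, c X * S.superchar X t := by
        rw [← Finset.sum_coe_sort, Finset.mul_sum]
        exact Finset.sum_congr rfl fun X _ => by rw [← mul_assoc, hcoeff, one_mul]
    _ = 0 := by rw [← hc, Pi.single_eq_of_ne ht, mul_zero]

theorem exists_superchar_apply_ne_zero (t : G) : ∃ X ∈ S.parts, S.superchar X t ≠ 0 := by
  obtain ⟨c, hc⟩ := S.exists_eq_sum_superchar (f := 1) fun _ _ _ => rfl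
  by_contra! h
  simpa [h] using hc t

theorem le_V (N : Subgroup G) : N ≤ S.V N := by
  intro t htN
  by_contra htV
  have hvanish : ∀ X ∈ S.parts, ¬N ≤ charKer (S.superchar X) → S.superchar X t = 0 :=
    fun X hX hN => by_contra fun h => htV (Subgroup.subset_closure ⟨_, ⟨⟨X, hX, rfl⟩, hN⟩, h⟩)
  have ht1 : t ≠ 1 := by rintro rfl; exact htV (one_mem _)
  have hsum : ∑ X ∈ S.parts.filter (fun X => N ≤ charKer (S.superchar X)), S.superchar X 1
      = 0 := by
    rw [← S.sum_superchar_eq_zero_of_ne_one ht1, Finset.sum_filter]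
    refine Finset.sum_congr rfl fun X hX => ?_
    split_ifs with hN
    · simpa using (hN htN 1).symm
    · exact (hvanish X hX hN).symm
  have hker : ∀ X ∈ S.parts, ¬N ≤ charKer (S.superchar X) := by
    intro X hX hN
    have hre := congrArg Complex.re hsum
    rw [Complex.re_sum, Complex.zero_re, Finset.sum_eq_zero_iff_of_nonneg] at hre
    · exact (S.superchar_one_re_pos hX).ne' (hre X (Finset.mem_filter.mpr ⟨hX, hN⟩))
    · exact fun X hX => (S.superchar_one_re_pos (Finset.mem_filter.mp hX).1).le
  obtain ⟨X, hX, hne⟩ := S.exists_superchar_apply_ne_zero t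
  exact hne (hvanish X hX (hker X hX))

theorem comm_mono {H K : Subgroup G} (h : H ≤ K) : S.comm H ≤ S.comm K :=
  Subgroup.closure_mono fun _ ⟨g, hg, k, hk, hx⟩ => ⟨g, h hg, k, hk, hx⟩

theorem gamma_succ {n : ℕ} (hn : 1 ≤ n) : S.gamma (n + 1) = S.comm (S.gamma n) := by
  obtain ⟨m, rfl⟩ := Nat.exists_eq_add_of_le' hn
  rfl

theorem Vseq_succ {n : ℕ} (hn : 1 ≤ n) : S.Vseq (n + 1) = S.comm (S.Vseq n) := by
  obtain ⟨m, rfl⟩ := Nat.exists_eq_add_of_le' hn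
  rfl

end SCT

/-- for all `i ≥ 1`, `γ_{i+1}(S) ≤ V_i(S) ≤ γ_i(S)`. -/
theorem gamma_succ_le_Vseq_le_gamma (S : SCT G) (i : ℕ) (hi : 1 ≤ i) :
    S.gamma (i + 1) ≤ S.Vseq i ∧ S.Vseq i ≤ S.gamma i := by
  induction i, hi using Nat.le_induction with
  | base => exact ⟨S.le_V S.derived, le_top⟩
  | succ n hn ih =>
    rw [S.Vseq_succ hn, S.gamma_succ (hn.trans n.le_succ)]
    exact ⟨S.comm_mono ih.1, (S.comm_mono ih.2).trans (S.gamma_succ hn).ge⟩
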